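/- (Conditional Mrs. Gerber's Lemma application) Let U → X → Y1 → Y2 be a Markov chain where X, Y1, Y2 are {0,1}-valued, Y2 = Y1 ⊕ Ψ̃ with Ψ̃ ~ Bern(p̃) independent of (U, Y1), and p̃ ∈ [0,1/2]. Then H(Y2|U) ≥ h_b( h_b^{-1}(H(Y1|U)) ∗ p̃ ), where h_b^{-1} : [0, log 2] → [0, 1/2] is the inverse of binary entropy restricted to [0,1/2]. -/

import Mathlib

open Finset

/-- Binary entropy function (natural logarithm). -/
noncomputable def binEnt (q : ℝ) : ℝ := -q * Real.log q - (1 - q) * Real.log (1 - q)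

/-- Binary convolution `a ∗ b = a(1-b) + b(1-a)`. -/
def bconv (a b : ℝ) : ℝ := a * (1 - b) + b * (1 - a)

/-- Inverse of the binary entropy function restricted to `[0, 1/2]`:
for `v ∈ [0, log 2]` this is the unique `x ∈ [0,1/2]` with `binEnt x = v`. -/
noncomputable def binEntInv (v : ℝ) : ℝ :=
  sSup {x : ℝ | 0 ≤ x ∧ x ≤ 1 / 2 ∧ binEnt x ≤ v}

/-- Conditional entropy `H(Z|U)` of a joint distribution `p` of `(U,Z)`. -/
noncomputable def condEnt {U Z : Type*} [Fintype U] [Fintype Z] (p : U → Z → ℝ) : ℝ :=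
  -∑ u, ∑ z, p u z * Real.log (p u z / ∑ z', p u z')

/-!
With `w_u = P(U = u)` and `x_u = P(Y₁ = 1 | U = u)` one has `H(Y₁|U) = ∑ w_u h(x_u)` and
`H(Y₂|U) = ∑ w_u h(x_u ∗ p)`, so the claim is Jensen's inequality for `v ↦ h(h⁻¹(v) ∗ p)`.
Instead of proving this function convex we give it a supporting line at every `v₀ = h(x₀)`:
with `c = (1 - 2p) h'(x₀ ∗ p) / h'(x₀)`, the function `x ↦ h(x ∗ p) - c h(x)` has derivative
`(1 - 2p) h'(x) (Ψ x - Ψ x₀)` where `Ψ x = h'(x ∗ p) / h'(x)`, hence is minimal at `x₀` as soon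
as `Ψ` is nondecreasing on `(0, 1/2)`. Writing `s = 1 - 2x`, so that `1 - 2(x ∗ p) = (1 - 2p) s`
and `h'(x) = log((1 + s)/(1 - s))`, the monotonicity of `Ψ` reduces to `(1 - s²) artanh s / s`
being decreasing, which follows from `artanh s ≥ s`.
-/

open Real Set

lemma binEnt_eq_binEntropy : binEnt = binEntropy := by
  funext x
  rw [binEnt, binEntropy, log_inv, log_inv]
  ring

lemma bconv_comm (a b : ℝ) : bconv a b = bconv b a := by
  rw [bconv, bconv]; ring

lemma bconv_one_sub (a b : ℝ) : bconv (1 - a) b = 1 - bconv a b := by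
  rw [bconv, bconv]; ring

lemma one_sub_two_mul_bconv (a b : ℝ) : 1 - 2 * bconv a b = (1 - 2 * b) * (1 - 2 * a) := by
  rw [bconv]; ring

lemma hasDerivAt_bconv_left (b x : ℝ) : HasDerivAt (fun a ↦ bconv a b) (1 - 2 * b) x := by
  have h := ((hasDerivAt_id x).mul_const (1 - b)).add (((hasDerivAt_id x).const_sub 1).const_mul b)
  exact h.congr_deriv (by ring)

lemma le_bconv_of_le_half {a b : ℝ} (ha : a ≤ 1 / 2) (hb : 0 ≤ b) : a ≤ bconv a b := by
  rw [bconv]; nlinarith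

lemma bconv_le_half {a b : ℝ} (ha : a ≤ 1 / 2) (hb : b ≤ 1 / 2) : bconv a b ≤ 1 / 2 := by
  rw [bconv]; nlinarith

lemma bconv_mem_Ioo {a b : ℝ} (ha : a ∈ Ioo (0 : ℝ) (1 / 2)) (hb : b ∈ Ico (0 : ℝ) (1 / 2)) :
    bconv a b ∈ Ioo (0 : ℝ) (1 / 2) := by
  obtain ⟨ha0, ha1⟩ := ha
  obtain ⟨hb0, hb1⟩ := hb
  rw [bconv]
  constructor <;> nlinarith

noncomputable def binEntropySlope (x : ℝ) : ℝ := log (1 - x) - log x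

lemma binEntropySlope_pos {x : ℝ} (h0 : 0 < x) (h1 : x < 1 / 2) : 0 < binEntropySlope x :=
  sub_pos.2 (log_lt_log h0 (by linarith))

lemma hasDerivAt_binEntropySlope {x : ℝ} (h0 : 0 < x) (h1 : x < 1) :
    HasDerivAt binEntropySlope (-(x * (1 - x))⁻¹) x := by
  have h := (((hasDerivAt_id x).const_sub 1).log (by simp; linarith)).sub (hasDerivAt_log h0.ne')
  have h1' : 1 - x ≠ 0 := by linarith
  exact h.congr_deriv (by simp only [id]; field_simp; ring)

lemma two_mul_one_sub_two_mul_le_binEntropySlope {x : ℝ} (h0 : 0 < x) (h1 : x ≤ 1 / 2) :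
    2 * (1 - 2 * x) ≤ binEntropySlope x := by
  set t := 1 - 2 * x
  have hsum := hasSum_log_sub_log_of_abs_lt_one (x := t) (by rw [abs_lt]; constructor <;> linarith)
  have ht : 0 ≤ t := by linarith
  have hfirst := le_hasSum hsum 0 fun k _ ↦ by positivity
  have hlog : log (1 + t) - log (1 - t) = binEntropySlope x := by
    rw [binEntropySlope, show 1 + t = 2 * (1 - x) by ring, show 1 - t = 2 * x by ring,
      log_mul two_ne_zero (by linarith), log_mul two_ne_zero h0.ne']
    ring
  simp only [← hlog]
  simpa using hfirst

lemma monotoneOn_binEntropySlope_mul_div :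
    MonotoneOn (fun x ↦ x * (1 - x) * binEntropySlope x / (1 - 2 * x)) (Ioo 0 (1 / 2)) := by
  have hderiv : ∀ x ∈ Ioo (0 : ℝ) (1 / 2), HasDerivAt
      (fun x ↦ x * (1 - x) * binEntropySlope x / (1 - 2 * x))
      ((((1 - 2 * x) * binEntropySlope x - 1) * (1 - 2 * x)
        + 2 * (x * (1 - x) * binEntropySlope x)) / (1 - 2 * x) ^ 2) x := by
    rintro x ⟨hx0, hx1⟩
    have hpoly : HasDerivAt (fun x : ℝ ↦ x * (1 - x)) (1 - 2 * x) x :=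
      ((hasDerivAt_id' x).mul ((hasDerivAt_id' x).const_sub 1)).congr_deriv (by ring)
    have hnum := hpoly.mul (hasDerivAt_binEntropySlope hx0 (by linarith))
    have hden := ((hasDerivAt_id' x).const_mul 2).const_sub 1
    refine (hnum.div hden (by linarith)).congr_deriv ?_
    have : 1 - x ≠ 0 := by linarith
    have : 1 - 2 * x ≠ 0 := by linarith
    simp only [Pi.mul_apply]
    field_simp
    ring
  refine monotoneOn_of_deriv_nonneg (convex_Ioo 0 (1 / 2))
    (fun x hx ↦ (hderiv x hx).continuousAt.continuousWithinAt)
    (fun x hx ↦ (hderiv x (interior_subset hx)).differentiableAt.differentiableWithinAt)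
    fun x hx ↦ ?_
  rw [interior_Ioo] at hx
  obtain ⟨hx0, hx1⟩ := hx
  rw [(hderiv x ⟨hx0, hx1⟩).deriv]
  have hL := two_mul_one_sub_two_mul_le_binEntropySlope hx0 hx1.le
  apply div_nonneg _ (sq_nonneg _)
  have hq : 0 ≤ 1 - 2 * x + 2 * x ^ 2 := by nlinarith
  nlinarith [sq_nonneg (1 - 2 * x), mul_le_mul_of_nonneg_left hL hq]

lemma mul_binEntropySlope_le_bconv {x p : ℝ} (hx : x ∈ Ioo (0 : ℝ) (1 / 2))
    (hp : p ∈ Ico (0 : ℝ) (1 / 2)) :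
    (1 - 2 * p) * (x * (1 - x) * binEntropySlope x)
      ≤ bconv x p * (1 - bconv x p) * binEntropySlope (bconv x p) := by
  have hmono := monotoneOn_binEntropySlope_mul_div hx (bconv_mem_Ioo hx hp)
    (le_bconv_of_le_half hx.2.le hp.1)
  simp only [one_sub_two_mul_bconv] at hmono
  rw [div_le_div_iff₀ (by linarith [hx.2]) (by nlinarith [hx.2, hp.2])] at hmono
  nlinarith [hx.2, hp.2]

lemma monotoneOn_binEntropySlope_bconv_div {p : ℝ} (hp : p ∈ Ico (0 : ℝ) (1 / 2)) :
    MonotoneOn (fun x ↦ binEntropySlope (bconv x p) / binEntropySlope x) (Ioo 0 (1 / 2)) := by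
  have hderiv : ∀ x ∈ Ioo (0 : ℝ) (1 / 2), HasDerivAt
      (fun x ↦ binEntropySlope (bconv x p) / binEntropySlope x)
      ((binEntropySlope (bconv x p) / (x * (1 - x))
        - (1 - 2 * p) * binEntropySlope x / (bconv x p * (1 - bconv x p)))
        / binEntropySlope x ^ 2) x := by
    intro x hx
    obtain ⟨hy0, hy1⟩ := bconv_mem_Ioo hx hp
    have hnum := (hasDerivAt_binEntropySlope hy0 (by linarith)).comp x (hasDerivAt_bconv_left p x)
    have hden := hasDerivAt_binEntropySlope hx.1 (by linarith [hx.2])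
    refine (hnum.div hden (binEntropySlope_pos hx.1 hx.2).ne').congr_deriv ?_
    simp only [Function.comp_apply, div_eq_mul_inv]
    ring
  refine monotoneOn_of_deriv_nonneg (convex_Ioo 0 (1 / 2))
    (fun x hx ↦ (hderiv x hx).continuousAt.continuousWithinAt)
    (fun x hx ↦ (hderiv x (interior_subset hx)).differentiableAt.differentiableWithinAt)
    fun x hx ↦ ?_
  rw [interior_Ioo] at hx
  obtain ⟨hy0, hy1⟩ := bconv_mem_Ioo hx hp
  rw [(hderiv x hx).deriv]
  apply div_nonneg _ (sq_nonneg _)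
  rw [sub_nonneg, div_le_div_iff₀ (by nlinarith) (by nlinarith [hx.1, hx.2])]
  linarith [mul_binEntropySlope_le_bconv hx hp]

lemma binEntropy_bconv_supporting_of_mem_Ioo {p x₀ x : ℝ} (hp : p ∈ Ico (0 : ℝ) (1 / 2))
    (hx₀ : x₀ ∈ Ioo (0 : ℝ) (1 / 2)) (hx : x ∈ Icc (0 : ℝ) (1 / 2)) :
    binEntropy (bconv x₀ p)
      + (1 - 2 * p) * (binEntropySlope (bconv x₀ p) / binEntropySlope x₀)
        * (binEntropy x - binEntropy x₀)
      ≤ binEntropy (bconv x p) := by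
  set Ψ := fun x ↦ binEntropySlope (bconv x p) / binEntropySlope x
  set g := fun t ↦ binEntropy (bconv t p) - (1 - 2 * p) * Ψ x₀ * binEntropy t
  have hderiv : ∀ t ∈ Ioo (0 : ℝ) (1 / 2),
      HasDerivAt g ((1 - 2 * p) * binEntropySlope t * (Ψ t - Ψ x₀)) t := by
    rintro t ⟨ht0, ht1⟩
    obtain ⟨hy0, hy1⟩ := bconv_mem_Ioo ⟨ht0, ht1⟩ hp
    have hL := (binEntropySlope_pos ht0 ht1).ne'
    have h₁ := (hasDerivAt_binEntropy hy0.ne' (by linarith)).comp t (hasDerivAt_bconv_left p t)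
    have h₂ := (hasDerivAt_binEntropy ht0.ne' (by linarith)).const_mul ((1 - 2 * p) * Ψ x₀)
    refine (h₁.sub h₂).congr_deriv ?_
    simp only [Ψ, binEntropySlope] at hL ⊢
    field_simp
  have hdiff : ∀ a b, 0 ≤ a → b ≤ 1 / 2 → DifferentiableOn ℝ g (Ioo a b) := fun a b ha hb t ht ↦
    (hderiv t ⟨ha.trans_lt ht.1, ht.2.trans_le hb⟩).differentiableAt.differentiableWithinAt
  have hcont : Continuous g := by simp only [g, bconv]; fun_prop
  have hΨ := monotoneOn_binEntropySlope_bconv_div hp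
  have hmin : IsMinOn g (Icc 0 (1 / 2)) x₀ := by
    refine isMinOn_Icc_of_deriv hcont.continuousAt hcont.continuousAt hcont.continuousAt
      (hdiff 0 x₀ le_rfl hx₀.2.le) (hdiff x₀ (1 / 2) hx₀.1.le le_rfl)
      (fun t ht ↦ ?_) (fun t ht ↦ ?_)
    · have ht' : t ∈ Ioo (0 : ℝ) (1 / 2) := ⟨ht.1, ht.2.trans hx₀.2⟩
      rw [(hderiv t ht').deriv]
      exact mul_nonpos_of_nonneg_of_nonpos
        (mul_nonneg (by linarith [hp.2]) (binEntropySlope_pos ht'.1 ht'.2).le)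
        (sub_nonpos.2 (hΨ ht' hx₀ ht.2.le))
    · have ht' : t ∈ Ioo (0 : ℝ) (1 / 2) := ⟨hx₀.1.trans ht.1, ht.2⟩
      rw [(hderiv t ht').deriv]
      exact mul_nonneg
        (mul_nonneg (by linarith [hp.2]) (binEntropySlope_pos ht'.1 ht'.2).le)
        (sub_nonneg.2 (hΨ hx₀ ht' ht.1.le))
  have := isMinOn_iff.1 hmin x hx
  simp only [g] at this
  linarith

lemma binEntropy_le_binEntropy_bconv {a b : ℝ} (ha : a ∈ Icc (0 : ℝ) (1 / 2))
    (hb : b ∈ Icc (0 : ℝ) (1 / 2)) : binEntropy a ≤ binEntropy (bconv a b) := by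
  have hle := le_bconv_of_le_half ha.2 hb.1
  have hhalf := bconv_le_half ha.2 hb.2
  rw [one_div] at ha hhalf
  exact binEntropy_strictMonoOn.monotoneOn ha ⟨ha.1.trans hle, hhalf⟩ hle

lemma exists_binEntropy_bconv_supporting {p x₀ : ℝ} (hp : p ∈ Icc (0 : ℝ) (1 / 2))
    (hx₀ : x₀ ∈ Icc (0 : ℝ) (1 / 2)) :
    ∃ c, ∀ x ∈ Icc (0 : ℝ) 1,
      binEntropy (bconv x₀ p) + c * (binEntropy x - binEntropy x₀) ≤ binEntropy (bconv x p) := by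
  suffices ∃ c, ∀ x ∈ Icc (0 : ℝ) (1 / 2),
      binEntropy (bconv x₀ p) + c * (binEntropy x - binEntropy x₀) ≤ binEntropy (bconv x p) by
    obtain ⟨c, hc⟩ := this
    refine ⟨c, fun x hx ↦ ?_⟩
    rcases le_total x (1 / 2) with hx' | hx'
    · exact hc x ⟨hx.1, hx'⟩
    · simpa [bconv_one_sub] using hc (1 - x) ⟨by linarith [hx.2], by linarith⟩
  by_cases hx₀half : x₀ = 1 / 2
  · refine ⟨1, fun x hx ↦ ?_⟩
    have : bconv x₀ p = x₀ := by rw [hx₀half, bconv]; ring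
    rw [this]
    linarith [binEntropy_le_binEntropy_bconv hx hp]
  by_cases hdeg : x₀ = 0 ∨ p = 1 / 2
  · refine ⟨0, fun x hx ↦ ?_⟩
    have : bconv x₀ p = p := by rcases hdeg with h | h <;> rw [h, bconv] <;> ring
    rw [this, bconv_comm]
    linarith [binEntropy_le_binEntropy_bconv hp hx]
  obtain ⟨hx₀0, hphalf⟩ := not_or.1 hdeg
  exact ⟨_, fun x hx ↦ binEntropy_bconv_supporting_of_mem_Ioo ⟨hp.1, hp.2.lt_of_ne hphalf⟩
    ⟨hx₀.1.lt_of_ne' hx₀0, hx₀.2.lt_of_ne hx₀half⟩ hx⟩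

lemma binEntInv_mem_Icc_and_binEntropy_eq {v : ℝ} (h0 : 0 ≤ v) (h1 : v ≤ log 2) :
    binEntInv v ∈ Icc (0 : ℝ) (1 / 2) ∧ binEntropy (binEntInv v) = v := by
  rw [one_div]
  obtain ⟨t, ht, htv⟩ : ∃ t ∈ Icc (0 : ℝ) 2⁻¹, binEntropy t = v :=
    intermediate_value_Icc (by norm_num) binEntropy_continuous.continuousOn
      (by simpa using (⟨h0, h1⟩ : v ∈ Icc 0 (log 2)))
  have hgreatest : IsGreatest {x : ℝ | 0 ≤ x ∧ x ≤ 1 / 2 ∧ binEnt x ≤ v} t := by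
    refine ⟨⟨ht.1, by simpa using ht.2, by rw [binEnt_eq_binEntropy, htv]⟩, ?_⟩
    rintro z ⟨hz0, hz1, hzv⟩
    by_contra! htz
    rw [binEnt_eq_binEntropy] at hzv
    have := binEntropy_strictMonoOn ht ⟨hz0, by simpa using hz1⟩ htz
    linarith
  rw [binEntInv, hgreatest.csSup_eq]
  exact ⟨ht, htv⟩

lemma le_sum_mul_of_supporting {ι : Type*} (s : Finset ι) {w f g : ι → ℝ} {a c : ℝ}
    (hw : ∑ i ∈ s, w i = 1) (hw0 : ∀ i ∈ s, 0 ≤ w i)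
    (h : ∀ i ∈ s, a + c * (f i - ∑ j ∈ s, w j * f j) ≤ g i) :
    a ≤ ∑ i ∈ s, w i * g i := by
  set F := ∑ j ∈ s, w j * f j
  have hexpand : ∀ i, w i * (a + c * (f i - F)) = a * w i + c * (w i * f i) - c * F * w i :=
    fun i ↦ by ring
  calc a = ∑ i ∈ s, w i * (a + c * (f i - F)) := by
        simp only [hexpand, Finset.sum_sub_distrib, Finset.sum_add_distrib, ← Finset.mul_sum, hw]
        ring
    _ ≤ ∑ i ∈ s, w i * g i :=
        Finset.sum_le_sum fun i hi ↦ mul_le_mul_of_nonneg_left (h i hi) (hw0 i hi)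

theorem binEntropy_bconv_binEntInv_le_sum {ι : Type*} (s : Finset ι) {w x : ι → ℝ} {p : ℝ}
    (hp : p ∈ Icc (0 : ℝ) (1 / 2)) (hw : ∑ i ∈ s, w i = 1) (hw0 : ∀ i ∈ s, 0 ≤ w i)
    (hx : ∀ i ∈ s, x i ∈ Icc (0 : ℝ) 1) :
    binEntropy (bconv (binEntInv (∑ i ∈ s, w i * binEntropy (x i))) p)
      ≤ ∑ i ∈ s, w i * binEntropy (bconv (x i) p) := by
  set V := ∑ i ∈ s, w i * binEntropy (x i)
  have hV0 : 0 ≤ V := Finset.sum_nonneg fun i hi ↦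
    mul_nonneg (hw0 i hi) (binEntropy_nonneg (hx i hi).1 (hx i hi).2)
  have hVlog : V ≤ log 2 := calc
    V ≤ ∑ i ∈ s, w i * log 2 :=
      Finset.sum_le_sum fun i hi ↦ mul_le_mul_of_nonneg_left binEntropy_le_log_two (hw0 i hi)
    _ = log 2 := by rw [← Finset.sum_mul, hw, one_mul]
  obtain ⟨hmem, hinv⟩ := binEntInv_mem_Icc_and_binEntropy_eq hV0 hVlog
  obtain ⟨c, hc⟩ := exists_binEntropy_bconv_supporting hp hmem
  refine le_sum_mul_of_supporting s hw hw0 (f := fun i ↦ binEntropy (x i)) (c := c) fun i hi ↦ ?_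
  simpa [hinv] using hc (x i) (hx i hi)

lemma neg_mul_log_div_add_add_mul_log_div_add (a b : ℝ) :
    -(a * log (a / (a + b)) + b * log (b / (a + b))) = (a + b) * binEntropy (b / (a + b)) := by
  by_cases hab : a + b = 0
  · simp [hab]
  rw [binEntropy, show 1 - b / (a + b) = a / (a + b) by field_simp; ring, log_inv, log_inv]
  field_simp
  ring

lemma condEnt_fin_two {U : Type*} [Fintype U] (p : U → Fin 2 → ℝ) :
    condEnt p = ∑ u, (p u 0 + p u 1) * binEntropy (p u 1 / (p u 0 + p u 1)) := by
  simp only [condEnt, Fin.sum_univ_two, ← Finset.sum_neg_distrib,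
    neg_mul_log_div_add_add_mul_log_div_add]

theorem stmt11 {U : Type*} [Fintype U]
    (pt : ℝ) (hpt : pt ∈ Set.Icc (0 : ℝ) (1 / 2))
    (p : U → Fin 2 → ℝ) (hpnn : ∀ u a, 0 ≤ p u a) (hpsum : ∑ u, ∑ a, p u a = 1)
    (q : U → Fin 2 → ℝ)
    (hq : ∀ u b, q u b = ∑ a, p u a * (if b = a then 1 - pt else pt)) :
    condEnt q ≥ binEnt (bconv (binEntInv (condEnt p)) pt) := by
  have hq0 (u : U) : q u 0 = p u 0 * (1 - pt) + p u 1 * pt := by simp [hq, Fin.sum_univ_two]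
  have hq1 (u : U) : q u 1 = p u 0 * pt + p u 1 * (1 - pt) := by simp [hq, Fin.sum_univ_two]
  have hqterm (u : U) : (q u 0 + q u 1) * binEntropy (q u 1 / (q u 0 + q u 1))
      = (p u 0 + p u 1) * binEntropy (bconv (p u 1 / (p u 0 + p u 1)) pt) := by
    rw [show q u 0 + q u 1 = p u 0 + p u 1 by rw [hq0, hq1]; ring]
    rcases eq_or_ne (p u 0 + p u 1) 0 with h | h
    · simp [h]
    · rw [hq1, bconv]
      field_simp
      ring_nf
  rw [ge_iff_le, binEnt_eq_binEntropy, condEnt_fin_two q, condEnt_fin_two p]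
  simp only [hqterm]
  refine binEntropy_bconv_binEntInv_le_sum Finset.univ hpt (by simpa [Fin.sum_univ_two] using hpsum)
    (fun u _ ↦ add_nonneg (hpnn u 0) (hpnn u 1)) fun u _ ↦
      ⟨div_nonneg (hpnn u 1) (add_nonneg (hpnn u 0) (hpnn u 1)),
        div_le_one_of_le₀ (le_add_of_nonneg_left (hpnn u 0)) (add_nonneg (hpnn u 0) (hpnn u 1))⟩
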